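/- arXiv:1312.4413 — 6 statements merged into one kernel-verified Lean document; each statement's English description precedes it below -/
import Mathlib

section
/- Let s_t denote the number of tuples (k, x_0, x_1, ..., x_{2k}) of nonnegative integers with k ≥ 0, x_0 + x_1 + ... + x_{2k} = t, and x_{2i} + x_{2i+1} ≥ 1 for all 0 ≤ i ≤ k-1. Then s_t satisfies the recurrence s_t = 4·s_{t-1} - 2·s_{t-2} for all t ≥ 2, with s_0 = 1 and s_1 = 3. -/
/-- Tuples `(x_0, …, x_{2k})` of nonnegative integers, represented as lists of odd
length, summing to `t`, with `x_{2i} + x_{2i+1} ≥ 1` for all `i < k`. -/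
def goodTuples (t : ℕ) : Set (List ℕ) :=
  {l | l.length % 2 = 1 ∧ l.sum = t ∧
    ∀ i, 2 * i + 2 ≤ l.length → 1 ≤ l.getD (2 * i) 0 + l.getD (2 * i + 1) 0}

/-!
A good tuple of sum `t` is either `(t)` or starts with a pair `(a, b)` of sum `t - j ≥ 1`
followed by a good tuple of sum `j < t`; there are `t - j + 1` such pairs, so
`s_t = 1 + ∑_{j < t} (t - j + 1) s_j`. Taking differences twice gives
`s_{t+1} = 3 s_t + ∑_{j < t} s_j` and then `s_{t+2} = 4 s_{t+1} - 2 s_t`.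
-/

open Finset

theorem not_nil_mem_goodTuples (t : ℕ) : [] ∉ goodTuples t := by
  simp [goodTuples]

theorem singleton_mem_goodTuples {x t : ℕ} : [x] ∈ goodTuples t ↔ x = t := by
  simp [goodTuples]

theorem cons_cons_mem_goodTuples {a b t : ℕ} {l : List ℕ} :
    a :: b :: l ∈ goodTuples t ↔ 1 ≤ a + b ∧ a + b + l.sum = t ∧ l ∈ goodTuples l.sum := by
  simp only [goodTuples, Set.mem_ofPred_eq, List.length_cons, List.sum_cons, true_and]
  constructor
  · rintro ⟨hlen, hsum, hpair⟩
    refine ⟨by simpa using hpair 0 (by omega), by omega, by omega, fun i hi => ?_⟩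
    simpa [Nat.mul_add] using hpair (i + 1) (by omega)
  · rintro ⟨hab, hsum, hlen, hpair⟩
    refine ⟨by omega, by omega, fun i hi => ?_⟩
    cases i with
    | zero => simpa using hab
    | succ i => simpa [Nat.mul_add] using hpair i (by omega)

def goodTuplesFinset (t : ℕ) : Finset (List ℕ) :=
  {[t]} ∪ (range t).attach.biUnion fun j =>
    (range (t - j.1 + 1) ×ˢ goodTuplesFinset j.1).image fun p => p.1 :: (t - j.1 - p.1) :: p.2
termination_by t
decreasing_by exact mem_range.mp j.2

theorem mem_goodTuplesFinset {t : ℕ} {l : List ℕ} :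
    l ∈ goodTuplesFinset t ↔
      l = [t] ∨ ∃ j < t, ∃ a ≤ t - j, ∃ l' ∈ goodTuplesFinset j, l = a :: (t - j - a) :: l' := by
  rw [goodTuplesFinset]
  simp only [mem_union, mem_singleton, mem_biUnion, mem_attach, mem_image, mem_product,
    mem_range, true_and, Subtype.exists, Prod.exists, Nat.lt_succ_iff]
  constructor
  · rintro (h | ⟨j, hj, a, l', ⟨ha, hl'⟩, rfl⟩)
    exacts [Or.inl h, Or.inr ⟨j, hj, a, ha, l', hl', rfl⟩]
  · rintro (h | ⟨j, hj, a, ha, l', hl', rfl⟩)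
    exacts [Or.inl h, Or.inr ⟨j, hj, a, l', ⟨ha, hl'⟩, rfl⟩]

theorem goodTuples_eq_coe_goodTuplesFinset (t : ℕ) : goodTuples t = goodTuplesFinset t := by
  induction t using Nat.strong_induction_on with
  | _ t ih =>
    ext l
    rw [Finset.mem_coe, mem_goodTuplesFinset]
    match l with
    | [] => simp [not_nil_mem_goodTuples]
    | [x] => simp [singleton_mem_goodTuples]
    | a :: b :: l =>
      simp only [cons_cons_mem_goodTuples, List.cons.injEq, reduceCtorEq, and_false, false_or]
      constructor
      · rintro ⟨hab, hsum, hl⟩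
        refine ⟨l.sum, by omega, a, by omega, l, ?_, rfl, by omega, rfl⟩
        rwa [← Finset.mem_coe, ← ih _ (by omega)]
      · rintro ⟨j, hj, a, ha, l, hl, rfl, rfl, rfl⟩
        rw [← Finset.mem_coe, ← ih j hj] at hl
        obtain rfl : l.sum = j := hl.2.1
        exact ⟨by omega, by omega, hl⟩

theorem card_goodTuplesFinset (t : ℕ) :
    #(goodTuplesFinset t) = 1 + ∑ j ∈ range t, (t - j + 1) * #(goodTuplesFinset j) := by
  have hinj (j : ℕ) :
      Function.Injective fun p : ℕ × List ℕ => p.1 :: (t - j - p.1) :: p.2 := by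
    rintro ⟨a, l⟩ ⟨a', l'⟩ h
    simp_all
  rw [goodTuplesFinset, card_union_of_disjoint, card_singleton, card_biUnion]
  · rw [← sum_attach (range t)]
    simp only [card_image_of_injective _ (hinj _), card_product, card_range]
  · intro j _ k _ hjk
    simp only [Function.onFun, disjoint_left, mem_image, mem_product, mem_range]
    rintro _ ⟨⟨a, l⟩, ⟨ha, -⟩, rfl⟩ ⟨⟨a', l'⟩, ⟨ha', -⟩, h⟩
    simp only [List.cons.injEq] at h
    have := mem_range.mp j.2
    have := mem_range.mp k.2
    exact hjk (Subtype.ext (by omega))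
  · simp

theorem natCard_goodTuples (t : ℕ) :
    Nat.card (goodTuples t) = 1 + ∑ j ∈ range t, (t - j + 1) * Nat.card (goodTuples j) := by
  simp only [goodTuples_eq_coe_goodTuplesFinset, Nat.card_coe_set_eq, Set.ncard_coe_finset]
  exact card_goodTuplesFinset t

section Recurrence

variable {c : ℕ → ℕ} (hc : ∀ t, c t = 1 + ∑ j ∈ range t, (t - j + 1) * c j)
include hc

theorem succ_eq_three_mul_add_sum (t : ℕ) : c (t + 1) = 3 * c t + ∑ j ∈ range t, c j := by
  have hshift : ∑ j ∈ range t, (t + 1 - j + 1) * c j =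
      ∑ j ∈ range t, (t - j + 1) * c j + ∑ j ∈ range t, c j := by
    rw [← sum_add_distrib]
    refine sum_congr rfl fun j hj => ?_
    rw [show t + 1 - j + 1 = (t - j + 1) + 1 by have := mem_range.mp hj; omega]
    ring
  rw [hc (t + 1), sum_range_succ, hshift, show t + 1 - t + 1 = 2 by omega, hc t]
  ring

theorem add_two_add_two_mul_eq_four_mul (t : ℕ) : c (t + 2) + 2 * c t = 4 * c (t + 1) := by
  have h₁ := succ_eq_three_mul_add_sum hc t
  have h₂ : c (t + 2) = 3 * c (t + 1) + ∑ j ∈ range (t + 1), c j :=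
    succ_eq_three_mul_add_sum hc (t + 1)
  rw [sum_range_succ] at h₂
  omega

end Recurrence

/-- `s_0 = 1`, `s_1 = 3`, and `s_t = 4·s_{t-1} - 2·s_{t-2}` for `t ≥ 2`
(stated additively over ℕ). -/
theorem stmt2 :
    Nat.card (goodTuples 0) = 1 ∧ Nat.card (goodTuples 1) = 3 ∧
      ∀ t : ℕ, 2 ≤ t →
        Nat.card (goodTuples t) + 2 * Nat.card (goodTuples (t - 2)) =
          4 * Nat.card (goodTuples (t - 1)) := by
  have h₀ : Nat.card (goodTuples 0) = 1 := by simp [natCard_goodTuples 0]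
  refine ⟨h₀, by rw [natCard_goodTuples, sum_range_one, h₀], fun t ht => ?_⟩
  obtain ⟨t, rfl⟩ := Nat.exists_eq_add_of_le' ht
  simpa using add_two_add_two_mul_eq_four_mul natCard_goodTuples t
end

section
/- Given integers h, k with 2 ≤ h ≤ k, the number of integer sequences y of length 2k over {2,3} that can be obtained from a fixed sequence x of length 2k over {2,3} by at most h single-character edits (insertions, deletions, substitutions, where inserted/substituted characters come from {2,3}) is at most (h+1)³ · C(2k,h)² · C(3k,h) · 2^h. -/
namespace Levenshtein

/-- A cost structure for Levenshtein edit distance (as in the removed Mathlib file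
`Mathlib/Data/List/EditDistance/Defs.lean`). -/
structure Cost (α β δ : Type*) where
  delete : α → δ
  insert : β → δ
  substitute : α → β → δ

/-- The default cost structure: every deletion, insertion and substitution costs `1`. -/
def defaultCost {α : Type*} [DecidableEq α] : Cost α α ℕ where
  delete _ := 1
  insert _ := 1
  substitute a b := if a = b then 0 else 1

end Levenshtein

/-- Levenshtein distance, by the same recursion the old Mathlib dynamic program computes. -/
def levenshtein {α β δ : Type*} [AddZeroClass δ] [Min δ] (C : Levenshtein.Cost α β δ) :
    List α → List β → δ
  | [], ys => ys.foldr (fun b r => C.insert b + r) 0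
  | xs, [] => xs.foldr (fun a r => C.delete a + r) 0
  | x :: xs, y :: ys =>
      min (C.delete x + levenshtein C xs (y :: ys))
        (min (C.insert y + levenshtein C (x :: xs) ys) (C.substitute x y + levenshtein C xs ys))

/-!
If `levenshtein x y ≤ h`, then `x` and `y` share a common subsequence `z` missing at most `h`
letters of each. So `y` is recovered from three pieces of data: the set `Dx` of at most `h`
positions of `x` deleted to reach `z`, the set `Dy` of at most `h` positions of `y` not coming
from `z`, and the letters of `y` at those positions, padded to a word of length exactly `h`.
With `|x| = |y| = 2k` and `h ≤ k`, there are at most `(h + 1) C(2k, h)` choices for each of `Dx`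
and `Dy`, since `C(2k, i) ≤ C(2k, h)` for `i ≤ h`, and `2 ^ h` choices for the letters.
-/

open Levenshtein Finset

section Levenshtein

variable {α : Type*} [DecidableEq α]

@[simp] lemma Levenshtein.defaultCost_delete (a : α) :
    (defaultCost : Cost α α ℕ).delete a = 1 := rfl

@[simp] lemma Levenshtein.defaultCost_insert (a : α) :
    (defaultCost : Cost α α ℕ).insert a = 1 := rfl

@[simp] lemma Levenshtein.defaultCost_substitute (a b : α) :
    (defaultCost : Cost α α ℕ).substitute a b = if a = b then 0 else 1 := rfl

@[simp] lemma levenshtein_defaultCost_nil_left (ys : List α) :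
    levenshtein defaultCost [] ys = ys.length := by
  induction ys with
  | nil => simp [levenshtein]
  | cons y ys ih => simp [levenshtein] at ih ⊢; omega

@[simp] lemma levenshtein_defaultCost_nil_right (xs : List α) :
    levenshtein defaultCost xs [] = xs.length := by
  induction xs with
  | nil => simp
  | cons x xs ih => cases xs <;> simp_all [levenshtein]; omega

theorem exists_sublist_sublist_of_levenshtein_le (xs ys : List α) {h : ℕ}
    (hd : levenshtein defaultCost xs ys ≤ h) :
    ∃ zs : List α, zs.Sublist xs ∧ zs.Sublist ys ∧
      xs.length ≤ zs.length + h ∧ ys.length ≤ zs.length + h := by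
  induction xs, ys using levenshtein.induct generalizing h with
  | case1 ys => exact ⟨[], by simp, by simp, by simp, by simpa using hd⟩
  | case2 xs _ => exact ⟨[], by simp, by simp, by simpa using hd, by simp⟩
  | case3 x xs y ys ih_del ih_ins ih_sub =>
    simp only [levenshtein, defaultCost_delete, defaultCost_insert, defaultCost_substitute,
      min_le_iff] at hd
    rcases hd with hd | hd | hd
    · obtain ⟨zs, hx, hy, hlx, hly⟩ := ih_del (h := h - 1) (by omega)
      exact ⟨zs, hx.cons x, hy, by simp; omega, by omega⟩
    · obtain ⟨zs, hx, hy, hlx, hly⟩ := ih_ins (h := h - 1) (by omega)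
      exact ⟨zs, hx, hy.cons y, by omega, by simp; omega⟩
    · split_ifs at hd with hxy
      · obtain ⟨zs, hx, hy, hlx, hly⟩ := ih_sub (h := h) (by omega)
        subst hxy
        exact ⟨x :: zs, hx.cons_cons x, hy.cons_cons x, by simp; omega, by simp; omega⟩
      · obtain ⟨zs, hx, hy, hlx, hly⟩ := ih_sub (h := h - 1) (by omega)
        exact ⟨zs, hx.cons x, hy.cons y, by simp; omega, by simp; omega⟩

end Levenshtein

section Mask

variable {α : Type*}

def maskSelect : List Bool → List α → List α
  | true :: m, a :: l => a :: maskSelect m l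
  | false :: m, _ :: l => maskSelect m l
  | _, _ => []

def maskMerge : List Bool → List α → List α → List α
  | true :: m, a :: l₁, l₂ => a :: maskMerge m l₁ l₂
  | false :: m, l₁, a :: l₂ => a :: maskMerge m l₁ l₂
  | _, _, _ => []

lemma maskSelect_sublist : ∀ (m : List Bool) (l : List α), (maskSelect m l).Sublist l
  | true :: m, a :: l => (maskSelect_sublist m l).cons_cons a
  | false :: m, a :: l => (maskSelect_sublist m l).cons a
  | [], _ => by simp [maskSelect]
  | _ :: _, [] => by simp [maskSelect]

lemma length_maskSelect : ∀ (m : List Bool) (l : List α), m.length = l.length →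
    (maskSelect m l).length = m.count true
  | [], [], _ => rfl
  | true :: m, _ :: l, h => by simp [maskSelect, length_maskSelect m l (by simpa using h)]
  | false :: m, _ :: l, h => by simp [maskSelect, length_maskSelect m l (by simpa using h)]

lemma maskMerge_maskSelect_maskSelect_not : ∀ (m : List Bool) (l : List α),
    m.length = l.length → maskMerge m (maskSelect m l) (maskSelect (m.map not) l) = l
  | [], [], _ => rfl
  | true :: m, _ :: l, h => by
    simp [maskSelect, maskMerge, maskMerge_maskSelect_maskSelect_not m l (by simpa using h)]
  | false :: m, _ :: l, h => by
    simp [maskSelect, maskMerge, maskMerge_maskSelect_maskSelect_not m l (by simpa using h)]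

lemma exists_maskSelect_eq_of_sublist {zs l : List α} (hz : zs.Sublist l) :
    ∃ m : List Bool, m.length = l.length ∧ m.count false = l.length - zs.length ∧
      maskSelect m l = zs := by
  induction hz with
  | slnil => exact ⟨[], rfl, rfl, rfl⟩
  | cons a hz ih =>
    obtain ⟨m, hlen, hcount, hsel⟩ := ih
    refine ⟨false :: m, by simp [hlen], ?_, by simp [maskSelect, hsel]⟩
    have := hz.length_le
    simp [hcount]
    omega
  | cons_cons a _ ih =>
    obtain ⟨m, hlen, hcount, hsel⟩ := ih
    exact ⟨true :: m, by simp [hlen], by simp [hcount], by simp [maskSelect, hsel]⟩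

def keepMask {n : ℕ} (D : Finset (Fin n)) : List Bool := List.ofFn fun i => decide (i ∉ D)

lemma length_keepMask {n : ℕ} (D : Finset (Fin n)) : (keepMask D).length = n :=
  List.length_ofFn

lemma count_false_keepMask {n : ℕ} (D : Finset (Fin n)) : (keepMask D).count false = #D := by
  calc (keepMask D).count false
      = #{i | List.Vector.get ⟨keepMask D, length_keepMask D⟩ i = false} :=
        (Fin.card_filter_univ_eq_vector_get_eq_count false ⟨keepMask D, length_keepMask D⟩).symm
    _ = #D := by congr 1; ext i; simp [keepMask, List.Vector.get, Fin.cast]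

lemma exists_keepMask_eq {n : ℕ} {m : List Bool} (hm : m.length = n) :
    ∃ D : Finset (Fin n), keepMask D = m := by
  subst hm
  exact ⟨univ.filter fun i : Fin m.length => m[i] = false, by simp [keepMask]⟩

lemma exists_maskSelect_keepMask_eq_of_sublist {zs l : List α} (hz : zs.Sublist l) :
    ∃ D : Finset (Fin l.length), #D = l.length - zs.length ∧
      maskSelect (keepMask D) l = zs := by
  obtain ⟨m, hlen, hcount, hsel⟩ := exists_maskSelect_eq_of_sublist hz
  obtain ⟨D, rfl⟩ := exists_keepMask_eq hlen
  exact ⟨D, (count_false_keepMask D).symm.trans hcount, hsel⟩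

lemma take_ofFn_getD (vs : List α) (d : α) {h : ℕ} (hlen : vs.length ≤ h) :
    (List.ofFn fun j : Fin h => vs.getD j d).take vs.length = vs := by
  apply List.ext_getElem (by simpa using hlen)
  intro j _ hj
  simp [List.getElem?_eq_getElem hj]

end Mask

section Count

def powersetCardLE {β : Type*} (h : ℕ) (s : Finset β) : Finset (Finset β) :=
  s.powerset.filter (#· ≤ h)

lemma card_powersetCardLE {β : Type*} (h : ℕ) (s : Finset β) :
    #(powersetCardLE h s) = ∑ i ∈ range (h + 1), (#s).choose i := by
  classical
  have : powersetCardLE h s = (range (h + 1)).biUnion (s.powersetCard ·) := by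
    ext D
    simp [powersetCardLE, mem_powersetCard, and_comm]
  rw [this, card_biUnion ((pairwise_disjoint_powersetCard s).set_pairwise _)]
  simp [card_powersetCard]

variable {α : Type*} [DecidableEq α]

/-- Deletes the positions `p.1` from `x`, then inserts the first `#p.2.1` letters of `p.2.2` at
the positions `p.2.1` of a word of length `n`. -/
def editDecode (x : List α) {n h : ℕ}
    (p : Finset (Fin x.length) × Finset (Fin n) × (Fin h → α)) : List α :=
  maskMerge (keepMask p.2.1) (maskSelect (keepMask p.1) x) ((List.ofFn p.2.2).take #p.2.1)

theorem mem_image_editDecode {A : Finset α} (hA : A.Nonempty) {x y : List α} {n h : ℕ}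
    (hn : y.length = n) (hyA : ∀ a ∈ y, a ∈ A) (hd : levenshtein defaultCost x y ≤ h) :
    y ∈ (powersetCardLE h univ ×ˢ powersetCardLE h univ ×ˢ
      Fintype.piFinset (fun _ : Fin h => A)).image (editDecode x (n := n)) := by
  subst hn
  obtain ⟨zs, hzx, hzy, hlx, hly⟩ := exists_sublist_sublist_of_levenshtein_le x y hd
  obtain ⟨Dx, hDx, hx⟩ := exists_maskSelect_keepMask_eq_of_sublist hzx
  obtain ⟨Dy, hDy, hy⟩ := exists_maskSelect_keepMask_eq_of_sublist hzy
  set vs := maskSelect ((keepMask Dy).map not) y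
  have hvs : vs.length = #Dy := by
    rw [length_maskSelect _ _ (by simp [length_keepMask]), ← count_false_keepMask]
    exact List.count_map_of_injective _ _ Bool.not_injective false
  obtain ⟨a, ha⟩ := hA
  refine mem_image.2 ⟨(Dx, Dy, fun j => vs.getD j a), ?_, ?_⟩
  · simp only [mem_product, powersetCardLE, mem_filter, mem_powerset, subset_univ, true_and,
      Fintype.mem_piFinset]
    refine ⟨by omega, by omega, fun j => ?_⟩
    rw [List.getD_eq_getElem?_getD]
    cases hj : vs[j]? with
    | none => exact ha
    | some b => exact hyA b ((maskSelect_sublist _ y).subset (List.mem_of_getElem? hj))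
  · rw [editDecode, ← hvs, take_ofFn_getD vs a (by omega), hx, ← hy]
    exact maskMerge_maskSelect_maskSelect_not _ _ (length_keepMask Dy)

theorem card_levenshtein_ball_le {A : Finset α} (hA : A.Nonempty) (x : List α) (n h : ℕ) :
    Nat.card {y : List α | y.length = n ∧ (∀ a ∈ y, a ∈ A) ∧
        levenshtein defaultCost x y ≤ h} ≤
      (∑ i ∈ range (h + 1), x.length.choose i) * (∑ i ∈ range (h + 1), n.choose i) *
        #A ^ h := by
  set codes : Finset (Finset (Fin x.length) × Finset (Fin n) × (Fin h → α)) :=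
    powersetCardLE h univ ×ˢ powersetCardLE h univ ×ˢ Fintype.piFinset fun _ => A
  calc Nat.card {y : List α | y.length = n ∧ (∀ a ∈ y, a ∈ A) ∧
          levenshtein defaultCost x y ≤ h}
      ≤ Nat.card (codes.image (editDecode x (n := n)) : Set (List α)) :=
        Nat.card_mono (finite_toSet _) fun y ⟨hn, hyA, hd⟩ => mem_image_editDecode hA hn hyA hd
    _ ≤ #codes := by simpa using card_image_le
    _ = _ := by simp [codes, card_powersetCardLE, mul_assoc]

end Count

lemma choose_le_choose_of_le_half {n i j : ℕ} (hij : i ≤ j) (hj : j ≤ n / 2) :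
    n.choose i ≤ n.choose j := by
  induction j, hij using Nat.le_induction with
  | base => rfl
  | succ j _ ih => exact (ih (by omega)).trans (Nat.choose_le_succ_of_lt_half_left (by omega))

lemma sum_range_choose_le_mul_choose {n h : ℕ} (hh : h ≤ n / 2) :
    ∑ i ∈ range (h + 1), n.choose i ≤ (h + 1) * n.choose h :=
  (sum_le_sum fun i hi => choose_le_choose_of_le_half (Nat.lt_succ_iff.1 (mem_range.1 hi)) hh).trans
    (by simp)

open Levenshtein in
theorem stmt5_general (h k : ℕ) (hk : h ≤ k) (x : List ℕ) (hxlen : x.length = 2 * k) :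
    Nat.card {y : List ℕ | y.length = 2 * k ∧ (∀ a ∈ y, a = 2 ∨ a = 3) ∧
        levenshtein defaultCost x y ≤ h} ≤
      (h + 1) ^ 3 * Nat.choose (2 * k) h ^ 2 * Nat.choose (3 * k) h * 2 ^ h := by
  have hball := card_levenshtein_ball_le (insert_nonempty 2 {3}) x (2 * k) h
  simp only [mem_insert, mem_singleton, hxlen] at hball
  have hsum := sum_range_choose_le_mul_choose (n := 2 * k) (h := h) (by omega)
  have hpos : 0 < (h + 1) * (3 * k).choose h := Nat.mul_pos h.succ_pos (Nat.choose_pos (by omega))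
  calc _ ≤ (h + 1) * (2 * k).choose h * ((h + 1) * (2 * k).choose h) * 2 ^ h := by
        refine hball.trans ?_
        gcongr
        simp
    _ ≤ (h + 1) * (2 * k).choose h * ((h + 1) * (2 * k).choose h) * 2 ^ h *
          ((h + 1) * (3 * k).choose h) := Nat.le_mul_of_pos_right _ hpos
    _ = _ := by ring

open Levenshtein in
/-- The number of sequences over `{2,3}` of length `2k` within Levenshtein distance `h`
of a fixed sequence `x` over `{2,3}` of length `2k` is at most
`(h+1)³ · C(2k,h)² · C(3k,h) · 2^h`. -/
theorem stmt5 (h k : ℕ) (hh : 2 ≤ h) (hk : h ≤ k) (x : List ℕ)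
    (hx23 : ∀ a ∈ x, a = 2 ∨ a = 3) (hxlen : x.length = 2 * k) :
    Nat.card {y : List ℕ | y.length = 2 * k ∧ (∀ a ∈ y, a = 2 ∨ a = 3) ∧
        levenshtein defaultCost x y ≤ h} ≤
      (h + 1) ^ 3 * Nat.choose (2 * k) h ^ 2 * Nat.choose (3 * k) h * 2 ^ h :=
  stmt5_general h k hk x hxlen
end

section
/- Given a finite sequence (w_1, ..., w_m) of positive real numbers with total sum w, there exists a sequence (a_1, ..., a_m) of binary strings, strictly increasing in the order ≺, such that |a_i| ≤ ⌊log₂ w − log₂ w_i⌋ for all i. -/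
/-- The base relations: `s·0·t ≺ s` and `s ≺ s·1·t'`. -/
def PrecBase (a b : List Bool) : Prop :=
  (∃ s t, a = s ++ false :: t ∧ b = s) ∨ (∃ s t, b = s ++ true :: t ∧ a = s)

/-- The order `≺` on binary strings: the transitive closure of `PrecBase`. -/
def Prec : List Bool → List Bool → Prop :=
  Relation.TransGen PrecBase

/-!
Put the strings on the nodes of the infinite binary tree and place the node `s` at the dyadic
point `treePos s ∈ (0, 1)` (the root at `1/2`, children halving towards their side), so that `≺`
is the order of these points. Normalise the weights to `p i = w i / w` and cut `[0, 1)` into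
consecutive intervals of lengths `p 1, …, p m`. With `ℓ = ⌊log₂ (1 / p i)⌋` we have
`2^-(ℓ+1) < p i`, so the `i`-th interval contains a point `k / 2^(ℓ+1)` with `0 < k < 2^(ℓ+1)`,
and such a point is the position of a node of depth at most `ℓ`. The chosen nodes are
`≺`-increasing because their positions are.
-/

noncomputable def treePos : List Bool → ℝ
  | [] => 1 / 2
  | false :: s => treePos s / 2
  | true :: s => (1 + treePos s) / 2

theorem treePos_mem_Ioo : ∀ s, treePos s ∈ Set.Ioo 0 1
  | [] => by norm_num [treePos]
  | false :: s => by
      obtain ⟨h0, h1⟩ := treePos_mem_Ioo s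
      constructor <;> simp only [treePos] <;> linarith
  | true :: s => by
      obtain ⟨h0, h1⟩ := treePos_mem_Ioo s
      constructor <;> simp only [treePos] <;> linarith

theorem PrecBase.cons (c : Bool) {a b : List Bool} (h : PrecBase a b) :
    PrecBase (c :: a) (c :: b) := by
  rcases h with ⟨s, t, ha, hb⟩ | ⟨s, t, hb, ha⟩
  · exact .inl ⟨c :: s, t, by rw [ha]; rfl, by rw [hb]⟩
  · exact .inr ⟨c :: s, t, by rw [hb]; rfl, by rw [ha]⟩

theorem Prec.cons (c : Bool) {a b : List Bool} (h : Prec a b) : Prec (c :: a) (c :: b) :=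
  Relation.TransGen.lift (c :: ·) (fun _ _ => PrecBase.cons c) a b h

theorem prec_of_treePos_lt : ∀ a b : List Bool, treePos a < treePos b → Prec a b
  | [], [], h => absurd h (lt_irrefl _)
  | [], true :: t, _ => .single (.inr ⟨[], t, rfl, rfl⟩)
  | false :: t, [], _ => .single (.inl ⟨[], t, rfl, rfl⟩)
  | false :: a, true :: b, _ =>
      .tail (.single (.inl ⟨[], a, rfl, rfl⟩)) (.inr ⟨[], b, rfl, rfl⟩)
  | false :: a, false :: b, h =>
      (prec_of_treePos_lt a b (by simp only [treePos] at h; linarith)).cons false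
  | true :: a, true :: b, h =>
      (prec_of_treePos_lt a b (by simp only [treePos] at h; linarith)).cons true
  | [], false :: t, h | true :: t, [], h => by
      have := treePos_mem_Ioo t
      simp only [treePos, Set.mem_Ioo] at *
      linarith
  | true :: a, false :: b, h => by
      have := treePos_mem_Ioo a
      have := treePos_mem_Ioo b
      simp only [treePos, Set.mem_Ioo] at *
      linarith

theorem exists_treePos_eq_div_two_pow :
    ∀ n k : ℕ, 0 < k → k < 2 ^ n → ∃ s, treePos s = k / 2 ^ n ∧ s.length < n
  | 0, k, hk, hkn => by omega
  | n + 1, k, hk, hkn => by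
      rcases lt_trichotomy k (2 ^ n) with hlt | rfl | hgt
      · obtain ⟨s, hs, hlen⟩ := exists_treePos_eq_div_two_pow n k hk hlt
        refine ⟨false :: s, ?_, by simpa using hlen⟩
        rw [treePos, hs, pow_succ, div_div]
      · exact ⟨[], by rw [treePos, pow_succ]; field_simp; norm_num, by simp⟩
      · obtain ⟨s, hs, hlen⟩ :=
          exists_treePos_eq_div_two_pow n (k - 2 ^ n) (by omega) (by rw [pow_succ] at hkn; omega)
        refine ⟨true :: s, ?_, by simpa using hlen⟩
        rw [treePos, hs, Nat.cast_sub hgt.le, pow_succ]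
        field_simp
        push_cast
        ring

theorem exists_treePos_mem_Ioo {x δ : ℝ} (hx : 0 ≤ x) (hδ : 0 < δ) (hxδ : x + δ ≤ 1) :
    ∃ s, treePos s ∈ Set.Ioo x (x + δ) ∧ (s.length : ℤ) ≤ Int.log 2 δ⁻¹ := by
  have hδ_inv : 1 ≤ δ⁻¹ := one_le_inv₀ hδ |>.2 (by linarith)
  set n := Nat.log 2 ⌊δ⁻¹⌋₊
  have hlog : Int.log 2 δ⁻¹ = n := Int.log_of_one_le_right 2 hδ_inv
  have hN : (0 : ℝ) < 2 ^ (n + 1) := by positivity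
  have hδN : 1 < δ * 2 ^ (n + 1) := by
    have hfloor : (⌊δ⁻¹⌋₊ : ℝ) + 1 ≤ 2 ^ (n + 1) := by
      exact_mod_cast Nat.lt_pow_succ_log_self one_lt_two _
    have := Nat.lt_floor_add_one δ⁻¹
    rw [← inv_mul_lt_iff₀ hδ, mul_one]
    linarith
  -- the first dyadic point `k / 2^(n+1)` to the right of `x`
  set k := ⌊x * 2 ^ (n + 1)⌋₊ + 1
  have hxk : x * 2 ^ (n + 1) < k := by
    simpa [k] using Nat.lt_floor_add_one (x * 2 ^ (n + 1))
  have hkx : (k : ℝ) < (x + δ) * 2 ^ (n + 1) := by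
    have := Nat.floor_le (mul_nonneg hx hN.le)
    push_cast [k]
    linarith
  have hk_lt : k < 2 ^ (n + 1) := by
    have : (k : ℝ) < 2 ^ (n + 1) := hkx.trans_le (by nlinarith)
    exact_mod_cast this
  obtain ⟨s, hs, hlen⟩ := exists_treePos_eq_div_two_pow (n + 1) k (Nat.succ_pos _) hk_lt
  refine ⟨s, ?_, by omega⟩
  rw [hs, Set.mem_Ioo, lt_div_iff₀ hN, div_lt_iff₀ hN]
  exact ⟨hxk, hkx⟩

open Real in
/-- Given positive weights `w_1, …, w_m` summing to `w`, there is a `≺`-increasing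
sequence of binary strings with `|a_i| ≤ ⌊log₂ w − log₂ w_i⌋`. -/
theorem stmt11 (m : ℕ) (w : Fin m → ℝ) (hw : ∀ i, 0 < w i) :
    ∃ a : Fin m → List Bool,
      (∀ i j : Fin m, i < j → Prec (a i) (a j)) ∧
      ∀ i, ((a i).length : ℤ) ≤ ⌊logb 2 (∑ j, w j) - logb 2 (w i)⌋ := by
  set W := ∑ j, w j
  have hwW (i : Fin m) : w i ≤ W := Finset.single_le_sum (fun j _ => (hw j).le) (Finset.mem_univ i)
  have hW (i : Fin m) : 0 < W := (hw i).trans_le (hwW i)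
  have hpartial (s : Finset (Fin m)) : 0 ≤ (∑ j ∈ s, w j) / W :=
    div_nonneg (Finset.sum_nonneg fun j _ => (hw j).le) (Finset.sum_nonneg fun j _ => (hw j).le)
  have hinterval (i : Fin m) :
      (∑ j ∈ Finset.Iio i, w j) / W + w i / W = (∑ j ∈ Finset.Iic i, w j) / W := by
    rw [← add_div, Finset.sum_Iio_add_eq_sum_Iic]
  have hnode (i : Fin m) := exists_treePos_mem_Ioo (hpartial (Finset.Iio i))
    (div_pos (hw i) (hW i)) (by
      rw [hinterval, div_le_one (hW i)]
      exact Finset.sum_le_univ_sum_of_nonneg fun j => (hw j).le)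
  choose a ha hlen using hnode
  refine ⟨a, fun i j hij => prec_of_treePos_lt _ _ ?_, fun i => ?_⟩
  · calc treePos (a i) < (∑ k ∈ Finset.Iic i, w k) / W := hinterval i ▸ (ha i).2
      _ ≤ (∑ k ∈ Finset.Iio j, w k) / W := by
        refine div_le_div_of_nonneg_right (Finset.sum_le_sum_of_subset_of_nonneg ?_ ?_) (hW i).le
        · exact fun k hk => Finset.mem_Iio.2 ((Finset.mem_Iic.1 hk).trans_lt hij)
        · exact fun k _ _ => (hw k).le
      _ < treePos (a j) := (ha j).1
  · have hfloor : ⌊logb 2 (W / w i)⌋ = Int.log 2 (W / w i) := by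
      exact_mod_cast floor_logb_natCast (b := 2) (div_pos (hW i) (hw i)).le
    rw [← logb_div (hW i).ne' (hw i).ne', hfloor, ← inv_div]
    exact hlen i
end

section
/- There is an injective encoding of lists a = (a_0, ..., a_{2k}) of binary strings satisfying a_{2i}·a_{2i+1} ≠ ε for all i < k into binary strings, such that the encoding of a has length exactly 3t where t = |a_0·...·a_{2k}|, for every t and k (with the encoding map injective across all such lists, including different t and k). -/
/-- Lists `(a_0, …, a_{2k})` of binary strings with `a_{2i} ++ a_{2i+1} ≠ []`
for all `i < k`. -/
def GoodList (a : List (List Bool)) : Prop :=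
  a.length % 2 = 1 ∧
    ∀ i, 2 * i + 2 ≤ a.length → a.getD (2 * i) [] ++ a.getD (2 * i + 1) [] ≠ []

/-!
Each pair `(a_{2i}, a_{2i+1})` of total length `n ≥ 1` is coded self-delimitingly in `3n` bits:
`1^(n-1) 0` announces `n`, `1^|a_{2i}| 0^|a_{2i+1}|` marks the split, and the content follows.
The last string `x` is coded as `1^|x| x 0^|x|`. A pair code of length `n`, whatever follows it,
starts with exactly `n - 1` ones, whereas a last code beginning with it would be at least `3n`
long and so start with at least `n` ones. Hence the code of a list is uniquely decodable.
-/

open List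

namespace GoodList

theorem not_nil : ¬ GoodList [] := by
  simp [GoodList]

theorem cons_cons_iff {x y : List Bool} {rest : List (List Bool)} :
    GoodList (x :: y :: rest) ↔ x ++ y ≠ [] ∧ GoodList rest := by
  have shift (i : ℕ) : 2 * (i + 1) = 2 * i + 1 + 1 := by ring
  constructor
  · rintro ⟨hodd, hpairs⟩
    refine ⟨by simpa using hpairs 0, by simp at hodd; omega, fun i hi => ?_⟩
    simpa only [shift, getD_cons_succ] using hpairs (i + 1) (by simp; omega)
  · rintro ⟨hxy, hodd, hpairs⟩
    refine ⟨by simp; omega, fun i hi => ?_⟩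
    cases i with
    | zero => simpa using hxy
    | succ i =>
      simpa only [shift, getD_cons_succ] using hpairs i (by simp at hi; omega)

end GoodList

namespace List

theorem replicate_true_append_false_cons_ne {k m : ℕ} (hkm : k < m) (l l' : List Bool) :
    replicate k true ++ false :: l ≠ replicate m true ++ l' := by
  induction k generalizing m with
  | zero => cases m <;> simp_all [replicate_succ]
  | succ k ih => cases m <;> simp_all [replicate_succ]

theorem replicate_true_append_false_cons_inj {k m : ℕ} {l l' : List Bool}
    (h : replicate k true ++ false :: l = replicate m true ++ false :: l') : k = m ∧ l = l' := by
  obtain hkm | rfl | hmk := lt_trichotomy k m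
  · exact absurd h (replicate_true_append_false_cons_ne hkm _ _)
  · simpa using h
  · exact absurd h.symm (replicate_true_append_false_cons_ne hmk _ _)

end List

def pairCode (x y : List Bool) : List Bool :=
  replicate (x.length + y.length - 1) true ++
    false :: (replicate x.length true ++ replicate y.length false ++ (x ++ y))

def lastCode (x : List Bool) : List Bool :=
  replicate x.length true ++ x ++ replicate x.length false

def encode : List (List Bool) → List Bool
  | [] => []
  | [x] => lastCode x
  | x :: y :: rest => pairCode x y ++ encode rest

theorem length_pos_of_append_ne_nil {x y : List Bool} (h : x ++ y ≠ []) :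
    0 < x.length + y.length := by
  simpa [← length_append, length_pos_iff] using h

theorem length_pairCode {x y : List Bool} (h : x ++ y ≠ []) :
    (pairCode x y).length = 3 * (x.length + y.length) := by
  have := length_pos_of_append_ne_nil h
  simp [pairCode]
  omega

theorem length_lastCode (x : List Bool) : (lastCode x).length = 3 * x.length := by
  simp [lastCode]
  ring

theorem length_encode {a : List (List Bool)} (ha : GoodList a) :
    (encode a).length = 3 * (a.map length).sum := by
  induction a using encode.induct with
  | case1 => exact absurd ha GoodList.not_nil
  | case2 x => simp [encode, length_lastCode]
  | case3 x y rest ih =>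
    obtain ⟨hxy, hrest⟩ := GoodList.cons_cons_iff.1 ha
    simp [encode, length_pairCode hxy, ih hrest]
    ring

theorem lastCode_injective : Function.Injective lastCode := by
  intro x y h
  have hlen : x.length = y.length := by
    simpa [length_lastCode] using congrArg length h
  simp only [lastCode, hlen, append_cancel_left_eq, append_cancel_right_eq] at h
  exact h

theorem lastCode_ne_pairCode_append {y z : List Bool} (hyz : y ++ z ≠ []) (x w : List Bool) :
    lastCode x ≠ pairCode y z ++ w := by
  intro h
  have hn := length_pos_of_append_ne_nil hyz
  have hlen : y.length + z.length ≤ x.length := by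
    have := congrArg length h
    simp only [length_append, length_lastCode, length_pairCode hyz] at this
    omega
  simp only [pairCode, lastCode, append_assoc, cons_append] at h
  exact replicate_true_append_false_cons_ne (by omega) _ _ h.symm

theorem pairCode_append_inj {x y x' y' w w' : List Bool} (hxy : x ++ y ≠ []) (hxy' : x' ++ y' ≠ [])
    (h : pairCode x y ++ w = pairCode x' y' ++ w') : x = x' ∧ y = y' ∧ w = w' := by
  have h : replicate (x.length + y.length - 1) true ++ false ::
        ((replicate x.length true ++ replicate y.length false) ++ (x ++ y) ++ w) =
      replicate (x'.length + y'.length - 1) true ++ false ::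
        ((replicate x'.length true ++ replicate y'.length false) ++ (x' ++ y') ++ w') := by
    simpa only [pairCode, append_assoc, cons_append] using h
  obtain ⟨hpred, h⟩ := replicate_true_append_false_cons_inj h
  have hn : x.length + y.length = x'.length + y'.length := by
    have := length_pos_of_append_ne_nil hxy
    have := length_pos_of_append_ne_nil hxy'
    omega
  obtain ⟨h, hw⟩ := append_inj h (by simp; omega)
  obtain ⟨hmarks, hcontent⟩ := append_inj h (by simp [hn])
  have hx : x.length = x'.length := by
    simpa [count_replicate] using congrArg (count true) hmarks
  obtain ⟨rfl, rfl⟩ := append_inj hcontent hx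
  exact ⟨rfl, rfl, hw⟩

theorem encode_injOn : Set.InjOn encode {a | GoodList a} := by
  intro a ha b hb h
  induction a using encode.induct generalizing b with
  | case1 => exact absurd ha GoodList.not_nil
  | case2 x =>
    rcases b with _ | ⟨y, _ | ⟨y', rest⟩⟩
    · exact absurd hb GoodList.not_nil
    · rw [lastCode_injective h]
    · exact absurd h (lastCode_ne_pairCode_append (GoodList.cons_cons_iff.1 hb).1 _ _)
  | case3 x y rest ih =>
    obtain ⟨hxy, hrest⟩ := GoodList.cons_cons_iff.1 ha
    rcases b with _ | ⟨x', _ | ⟨y', rest'⟩⟩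
    · exact absurd hb GoodList.not_nil
    · exact absurd h.symm (lastCode_ne_pairCode_append hxy _ _)
    · obtain ⟨hxy', hrest'⟩ := GoodList.cons_cons_iff.1 hb
      obtain ⟨rfl, rfl, hw⟩ := pairCode_append_inj hxy hxy' h
      rw [ih hrest hrest' hw]

/-- There is an injective encoding of such lists into binary strings of length
exactly `3t`, where `t` is the total length of the strings in the list. -/
theorem stmt16 :
    ∃ E : List (List Bool) → List Bool,
      Set.InjOn E {a | GoodList a} ∧
      ∀ a, GoodList a → (E a).length = 3 * (a.map List.length).sum :=
  ⟨encode, encode_injOn, fun _ => length_encode⟩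
end

section
/- Any list a = (a_0, ..., a_{2k}) of binary strings with a_{2i}·a_{2i+1} ≠ ε for all i < k and |a_0·...·a_{2k}| = t can be injectively encoded as a binary string of length exactly ⌈(1 + log₂(2+√2))·t⌉; i.e., the number of such lists for fixed t is at most 2^t·(2+√2)^t ≤ 2^{⌈(1+log₂(2+√2))t⌉}. -/
open Real Finset

lemma not_goodList_nil : ¬ GoodList [] := by simp [GoodList]

lemma goodList_cons_cons_iff {u v : List Bool} {rest : List (List Bool)} :
    GoodList (u :: v :: rest) ↔ u ++ v ≠ [] ∧ GoodList rest := by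
  simp only [GoodList, List.length_cons]
  constructor
  · rintro ⟨hodd, hpairs⟩
    refine ⟨hpairs 0 (by omega), by omega, fun i hi => ?_⟩
    simpa [Nat.mul_succ] using hpairs (i + 1) (by omega)
  · rintro ⟨huv, hodd, hpairs⟩
    refine ⟨by omega, fun i hi => ?_⟩
    cases i with
    | zero => simpa using huv
    | succ i => simpa [Nat.mul_succ] using hpairs i (by omega)

lemma ncard_length_eq {α : Type*} [Fintype α] (n : ℕ) :
    {l : List α | l.length = n}.ncard = Fintype.card α ^ n := by
  rw [← Nat.card_coe_set_eq, ← card_vector, ← Nat.card_eq_fintype_card]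
  rfl

lemma finite_length_add_length_eq {α : Type*} [Finite α] (m : ℕ) :
    {p : List α × List α | p.1.length + p.2.length = m}.Finite :=
  ((List.finite_length_le α m).prod (List.finite_length_le α m)).subset
    fun p (hp : _ = m) => ⟨show p.1.length ≤ m by omega, show p.2.length ≤ m by omega⟩

lemma ncard_length_add_length_eq_le {α : Type*} [Fintype α] (m : ℕ) :
    {p : List α × List α | p.1.length + p.2.length = m}.ncard
      ≤ (m + 1) * Fintype.card α ^ m := by
  calc _ ≤ ((range (m + 1) : Set ℕ) ×ˢ {l : List α | l.length = m}).ncard := by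
        refine Set.ncard_le_ncard_of_injOn (fun p => (p.1.length, p.1 ++ p.2)) ?_ ?_
          ((range (m + 1)).finite_toSet.prod (List.finite_length_eq α m))
        · rintro p (hp : _ = m)
          simp only [Set.mem_prod, coe_range, Set.mem_Iio, Set.mem_ofPred_eq, List.length_append]
          omega
        · rintro p - q - hpq
          simp only [Prod.mk.injEq] at hpq
          obtain ⟨h1, h2⟩ := List.append_inj hpq.2 hpq.1
          exact Prod.ext h1 h2
    _ = (m + 1) * Fintype.card α ^ m := by
        rw [Set.ncard_prod, ncard_length_eq, Set.ncard_coe_finset, card_range]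

def goodOfWeight (t : ℕ) : Set (List (List Bool)) :=
  {a | GoodList a ∧ (a.map List.length).sum = t}

def goodOfWeightCover (t : ℕ) : Set (List (List Bool)) :=
  (fun w => [w]) '' {w | w.length = t} ∪
    ⋃ m ∈ Icc 1 t, (fun q : (List Bool × List Bool) × List (List Bool) => q.1.1 :: q.1.2 :: q.2) ''
      ({p | p.1.length + p.2.length = m} ×ˢ goodOfWeight (t - m))

lemma goodOfWeight_subset_cover (t : ℕ) : goodOfWeight t ⊆ goodOfWeightCover t := by
  rintro a ⟨ha, rfl⟩
  match a, ha with
  | [], ha => exact absurd ha not_goodList_nil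
  | [w], _ => exact Or.inl ⟨w, by simp, rfl⟩
  | u :: v :: rest, ha =>
    obtain ⟨huv, hrest⟩ := goodList_cons_cons_iff.1 ha
    have huv : 1 ≤ u.length + v.length := by
      rw [Nat.one_le_iff_ne_zero, ← List.length_append, Ne, List.length_eq_zero_iff]
      exact huv
    refine Or.inr (Set.mem_biUnion (x := u.length + v.length) ?_ ⟨((u, v), rest), ?_, rfl⟩)
    · simp only [coe_Icc, Set.mem_Icc, List.map_cons, List.sum_cons]
      omega
    · refine ⟨rfl, hrest, ?_⟩
      simp only [List.map_cons, List.sum_cons]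
      omega

lemma finite_goodOfWeightCover {t : ℕ} (h : ∀ m ∈ Icc 1 t, (goodOfWeight (t - m)).Finite) :
    (goodOfWeightCover t).Finite :=
  ((List.finite_length_eq Bool t).image _).union <| (finite_toSet _).biUnion fun m hm =>
    ((finite_length_add_length_eq m).prod (h m hm)).image _

lemma finite_goodOfWeight (t : ℕ) : (goodOfWeight t).Finite := by
  induction t using Nat.strong_induction_on with
  | _ t ih =>
    refine (finite_goodOfWeightCover fun m hm => ih (t - m) ?_).subset (goodOfWeight_subset_cover t)
    have := mem_Icc.1 hm
    omega

lemma ncard_goodOfWeight_le (t : ℕ) :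
    (goodOfWeight t).ncard
      ≤ 2 ^ t + ∑ m ∈ Icc 1 t, (m + 1) * 2 ^ m * (goodOfWeight (t - m)).ncard := by
  calc _ ≤ (goodOfWeightCover t).ncard :=
        Set.ncard_le_ncard (goodOfWeight_subset_cover t)
          (finite_goodOfWeightCover fun _ _ => finite_goodOfWeight _)
    _ ≤ _ := (Set.ncard_union_le _ _).trans ?_
  gcongr
  · exact (Set.ncard_image_le (List.finite_length_eq Bool t)).trans (ncard_length_eq t).le
  · refine (set_ncard_biUnion_le _ _).trans (sum_le_sum fun m _ => ?_)
    refine (Set.ncard_image_le ((finite_length_add_length_eq m).prod (finite_goodOfWeight _))).trans ?_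
    rw [Set.ncard_prod]
    exact Nat.mul_le_mul_right _ (ncard_length_add_length_eq_le m)

lemma sum_mul_pow_sub_eq (t : ℕ) :
    ∑ m ∈ Icc 1 t, ((m : ℝ) + 1) * 2 ^ m * (4 + 2 * √2) ^ (t - m)
      = (4 + 2 * √2) ^ t - 2 ^ t - (√2 - 1) * t * 2 ^ t := by
  induction t with
  | zero => simp
  | succ t ih =>
    have hshift : ∑ m ∈ Icc 1 t, ((m : ℝ) + 1) * 2 ^ m * (4 + 2 * √2) ^ (t + 1 - m)
        = (4 + 2 * √2) * ∑ m ∈ Icc 1 t, ((m : ℝ) + 1) * 2 ^ m * (4 + 2 * √2) ^ (t - m) := by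
      rw [mul_sum]
      refine sum_congr rfl fun m hm => ?_
      rw [Nat.sub_add_comm (mem_Icc.1 hm).2, pow_succ]
      ring
    rw [sum_Icc_succ_top (by omega), hshift, ih, Nat.sub_self]
    push_cast
    linear_combination (-2 * (t : ℝ) * 2 ^ t) * Real.mul_self_sqrt (zero_le_two (α := ℝ))

lemma ncard_goodOfWeight_le_pow (t : ℕ) : ((goodOfWeight t).ncard : ℝ) ≤ (4 + 2 * √2) ^ t := by
  induction t using Nat.strong_induction_on with
  | _ t ih =>
    calc ((goodOfWeight t).ncard : ℝ)
        ≤ 2 ^ t + ∑ m ∈ Icc 1 t, ((m : ℝ) + 1) * 2 ^ m * (goodOfWeight (t - m)).ncard := by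
          exact_mod_cast ncard_goodOfWeight_le t
      _ ≤ 2 ^ t + ∑ m ∈ Icc 1 t, ((m : ℝ) + 1) * 2 ^ m * (4 + 2 * √2) ^ (t - m) := by
          gcongr with m hm
          exact ih _ (by have := mem_Icc.1 hm; omega)
      _ ≤ (4 + 2 * √2) ^ t := by
          rw [sum_mul_pow_sub_eq]
          have : 0 ≤ (√2 - 1) * t * 2 ^ t := by
            have := sub_nonneg.2 (Real.one_le_sqrt.2 one_le_two)
            positivity
          linarith

lemma pow_le_two_pow_ceil (t : ℕ) :
    (4 + 2 * √2) ^ t ≤ (2 : ℝ) ^ ⌈(1 + logb 2 (2 + √2)) * t⌉₊ := by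
  have hbase : 4 + 2 * √2 = (2 : ℝ) ^ (1 + logb 2 (2 + √2)) := by
    rw [Real.rpow_add two_pos, Real.rpow_one, Real.rpow_logb two_pos (by norm_num) (by positivity)]
    ring
  rw [hbase, ← Real.rpow_natCast, ← Real.rpow_mul zero_le_two, ← Real.rpow_natCast]
  exact Real.rpow_le_rpow_of_exponent_le one_le_two (Nat.le_ceil _)

lemma strictMono_natCeil_mul {c : ℝ} (hc : 1 ≤ c) : StrictMono fun n : ℕ => ⌈c * n⌉₊ := by
  intro n n' h
  have h' : (n : ℝ) + 1 ≤ n' := by exact_mod_cast h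
  rw [Nat.lt_ceil]
  calc (⌈c * n⌉₊ : ℝ) < c * n + 1 := Nat.ceil_lt_add_one (by positivity)
    _ ≤ c * n' := by nlinarith

lemma exists_injOn_length_eq {α : Type*} (s : Set α) (w : α → ℕ) {L : ℕ → ℕ}
    (hL : L.Injective) (hfin : ∀ t, {a ∈ s | w a = t}.Finite)
    (hcard : ∀ t, {a ∈ s | w a = t}.ncard ≤ 2 ^ L t) :
    ∃ E : α → List Bool, Set.InjOn E s ∧ ∀ a ∈ s, (E a).length = L (w a) := by
  have hfiber (t : ℕ) : ∃ f : α → List Bool,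
      {a ∈ s | w a = t} ⊆ f ⁻¹' {l | l.length = L t} ∧ Set.InjOn f {a ∈ s | w a = t} := by
    refine (hfin t).exists_injOn_of_encard_le ?_
    rw [← (hfin t).cast_ncard_eq, ← (List.finite_length_eq Bool (L t)).cast_ncard_eq,
      ncard_length_eq, Fintype.card_bool]
    exact_mod_cast hcard t
  choose f hmaps hinj using hfiber
  refine ⟨fun a => f (w a) a, fun a ha b hb hab => ?_, fun a ha => hmaps _ ⟨ha, rfl⟩⟩
  have hw : w a = w b := hL <| by
    rw [← hmaps _ ⟨ha, rfl⟩, ← hmaps _ ⟨hb, rfl⟩]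
    exact congrArg List.length hab
  exact hinj (w a) ⟨ha, rfl⟩ ⟨hb, hw.symm⟩ (by simp only at hab; rw [hab, hw])

open Real in
/-- There is an injective encoding of such lists into binary strings of length
exactly `⌈(1 + log₂(2+√2))·t⌉`, where `t` is the total length of the strings in
the list. -/
theorem stmt17 :
    ∃ E : List (List Bool) → List Bool,
      Set.InjOn E {a | GoodList a} ∧
      ∀ a, GoodList a →
        (E a).length =
          ⌈(1 + logb 2 (2 + Real.sqrt 2)) * ((a.map List.length).sum : ℝ)⌉₊ := by
  have hc : 1 ≤ 1 + logb 2 (2 + √2) :=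
    le_add_of_nonneg_right (Real.logb_nonneg one_lt_two (by linarith [Real.sqrt_nonneg 2]))
  exact exists_injOn_length_eq _ _ (strictMono_natCeil_mul hc).injective finite_goodOfWeight
    fun t => by exact_mod_cast (ncard_goodOfWeight_le_pow t).trans (pow_le_two_pow_ceil t)
end

section
/- In a tree labeled via heavy-light decomposition where each heavy label satisfies |hlabel(v)| ≤ ⌊log₂ size(apex(v)) − log₂ lsize(v)⌋ and each light label satisfies |llabel(v)| ≤ ⌊log₂ lsize(parent(v)) − log₂ size(v)⌋, the concatenation of sub-labels along any root-to-node path has total length at most ⌊log₂ n⌋: the telescoping sum ⌊log₂ a_0 − log₂ b_0⌋ + ⌊log₂ b_0 − log₂ a_1⌋ + ... + ⌊log₂ a_k − log₂ b_k⌋ ≤ ⌊log₂ a_0 − log₂ b_k⌋ holds for any positive reals a_0 ≥ b_0 ≥ a_1 ≥ ... ≥ a_k ≥ b_k with a_0 ≤ n and b_k ≥ 1. -/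
namespace Int

variable {R : Type*} [Ring R] [LinearOrder R] [IsStrictOrderedRing R] [FloorRing R]

theorem sum_floor_le_floor_sum {ι : Type*} (s : Finset ι) (f : ι → R) :
    ∑ i ∈ s, ⌊f i⌋ ≤ ⌊∑ i ∈ s, f i⌋ := by
  induction s using Finset.cons_induction with
  | empty => simp
  | cons j s hj ih =>
    rw [Finset.sum_cons, Finset.sum_cons]
    exact (add_le_add_right ih _).trans (le_floor_add _ _)

theorem sum_range_floor_sub_le (m : ℕ) (f : ℕ → R) :
    ∑ i ∈ Finset.range m, ⌊f i - f (i + 1)⌋ ≤ ⌊f 0 - f m⌋ := by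
  simpa only [Finset.sum_range_sub'] using
    sum_floor_le_floor_sum (Finset.range m) fun i ↦ f i - f (i + 1)

end Int

open Real in
theorem stmt19_general (m : ℕ) (x : ℕ → ℝ) :
    ∑ i ∈ Finset.range m, ⌊logb 2 (x i) - logb 2 (x (i + 1))⌋ ≤
      ⌊logb 2 (x 0) - logb 2 (x m)⌋ :=
  Int.sum_range_floor_sub_le m fun i ↦ logb 2 (x i)

open Real in
/-- Telescoping floors of logs: for positive reals `x_0 ≥ x_1 ≥ … ≥ x_m`,
`Σ_{i<m} ⌊log₂ x_i − log₂ x_{i+1}⌋ ≤ ⌊log₂ x_0 − log₂ x_m⌋`. -/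
theorem stmt19 (m : ℕ) (x : ℕ → ℝ) (hpos : ∀ i ≤ m, 0 < x i)
    (hmono : ∀ i < m, x (i + 1) ≤ x i) :
    ∑ i ∈ Finset.range m, ⌊logb 2 (x i) - logb 2 (x (i + 1))⌋ ≤
      ⌊logb 2 (x 0) - logb 2 (x m)⌋ :=
  stmt19_general m x
end
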